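/- Let π be a minimal valid function. Suppose that for every minimal valid function π*, S(π) ⊆ S(π*) implies π* = π. Then π is a facet. -/

import Mathlib

open scoped BigOperators

noncomputable section

/-- `ℝ^k` with the Euclidean norm. -/
abbrev Vec (k : ℕ) := EuclideanSpace ℝ (Fin k)

/-- The point of `ℝ^k` with the given integer coordinates. -/
def intVec (k : ℕ) (w : Fin k → ℤ) : Vec k := WithLp.toLp 2 (fun i => (w i : ℝ))

/-- A feasible solution of the infinite group relaxation: a finitely supported
`s : ℝ^k → ℕ` with `f + ∑ r, s r • r ∈ ℤ^k`. -/
def IsFeasible (k : ℕ) (f : Vec k) (s : Vec k →₀ ℕ) : Prop :=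
  ∃ w : Fin k → ℤ, f + ∑ r ∈ s.support, (s r : ℝ) • r = intVec k w

/-- A valid function for the infinite group relaxation. -/
def IsValid (k : ℕ) (f : Vec k) (π : Vec k → ℝ) : Prop :=
  (∀ r, 0 ≤ π r) ∧
  ∀ s : Vec k →₀ ℕ, IsFeasible k f s → 1 ≤ ∑ r ∈ s.support, π r * (s r : ℝ)

/-- A minimal valid function: no valid `π' ≠ π` with `π' ≤ π` pointwise. -/
def IsMinimal (k : ℕ) (f : Vec k) (π : Vec k → ℝ) : Prop :=
  IsValid k f π ∧ ¬ ∃ π' : Vec k → ℝ, IsValid k f π' ∧ π' ≠ π ∧ ∀ r, π' r ≤ π r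

/-- `S(θ)`: the feasible solutions satisfying the inequality of `θ` at equality. -/
def Ssol (k : ℕ) (f : Vec k) (θ : Vec k → ℝ) : Set (Vec k →₀ ℕ) :=
  {s | IsFeasible k f s ∧ ∑ r ∈ s.support, θ r * (s r : ℝ) = 1}

/-- A facet. -/
def IsFacet (k : ℕ) (f : Vec k) (π : Vec k → ℝ) : Prop :=
  IsValid k f π ∧
  ∀ π' : Vec k → ℝ, IsValid k f π' → Ssol k f π ⊆ Ssol k f π' → π' = π

/-- An extreme valid function. -/
def IsExtremeValid (k : ℕ) (f : Vec k) (π : Vec k → ℝ) : Prop :=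
  IsValid k f π ∧ ∀ π₁ π₂ : Vec k → ℝ, IsValid k f π₁ → IsValid k f π₂ →
    (∀ r, π r = (1 / 2) * π₁ r + (1 / 2) * π₂ r) → π₁ = π ∧ π₂ = π

/-- `E(θ)`: the pairs where `θ` is additive. -/
def Eadd (k : ℕ) (θ : Vec k → ℝ) : Set (Vec k × Vec k) :=
  {p | θ (p.1 + p.2) = θ p.1 + θ p.2}

/-- `θ` is genuinely `k`-dimensional: it does not factor through a linear map to `ℝ^(k-1)`. -/
def GenuinelyFullDim (k : ℕ) (θ : Vec k → ℝ) : Prop :=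
  ¬ ∃ (φ : Vec (k - 1) → ℝ) (T : Vec k →ₗ[ℝ] Vec (k - 1)), θ = φ ∘ T

/-- The cone generated by a finite family of vectors. -/
def coneOf {k m : ℕ} (v : Fin m → Vec k) : Set (Vec k) :=
  {x | ∃ lam : Fin m → ℝ, (∀ i, 0 ≤ lam i) ∧ x = ∑ i, lam i • v i}

/-- The cone generated by a set of vectors. -/
def coneOfSet {k : ℕ} (Vs : Set (Vec k)) : Set (Vec k) :=
  {x | ∃ (n : ℕ) (v : Fin n → Vec k) (lam : Fin n → ℝ),
    (∀ i, v i ∈ Vs) ∧ (∀ i, 0 ≤ lam i) ∧ x = ∑ i, lam i • v i}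

/-- A polyhedron: an intersection of finitely many closed halfspaces. -/
def IsPolyhedron {k : ℕ} (P : Set (Vec k)) : Prop :=
  ∃ (n : ℕ) (a : Fin n → Vec k) (b : Fin n → ℝ),
    P = {x | ∀ i, (inner ℝ (a i) x : ℝ) ≤ b i}

/-- A face of a polyhedron cut out by a valid inequality. -/
def IsFace {k : ℕ} (F P : Set (Vec k)) : Prop :=
  ∃ (a : Vec k) (b : ℝ), (∀ x ∈ P, (inner ℝ a x : ℝ) ≤ b) ∧
    F = {x | x ∈ P ∧ (inner ℝ a x : ℝ) = b}

/-- A polyhedral complex in `ℝ^k`. -/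
structure PolyhedralComplex (k : ℕ) where
  cells : Set (Set (Vec k))
  poly : ∀ P ∈ cells, IsPolyhedron P
  faces_mem : ∀ P ∈ cells, ∀ F : Set (Vec k), IsFace F P → F ∈ cells
  inter_face : ∀ P ∈ cells, ∀ Q ∈ cells, IsFace (P ∩ Q) P ∧ IsFace (P ∩ Q) Q

/-- A maximal cell of a polyhedral complex. -/
def IsMaximalCell {k : ℕ} (PC : PolyhedralComplex k) (P : Set (Vec k)) : Prop :=
  P ∈ PC.cells ∧ ∀ Q ∈ PC.cells, P ⊆ Q → Q = P

/-- A pure complex: all maximal cells are full-dimensional. -/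
def PolyhedralComplex.Pure {k : ℕ} (PC : PolyhedralComplex k) : Prop :=
  ∀ P : Set (Vec k), IsMaximalCell PC P → (interior P).Nonempty

/-- A complete complex: the union of the cells is all of `ℝ^k`. -/
def PolyhedralComplex.Complete {k : ℕ} (PC : PolyhedralComplex k) : Prop :=
  ⋃₀ PC.cells = Set.univ

/-- A polyhedral fan: finitely many cells, all of which are cones. -/
def IsFan {k : ℕ} (F : PolyhedralComplex k) : Prop :=
  F.cells.Finite ∧ ∀ C ∈ F.cells, ∀ x ∈ C, ∀ t : ℝ, 0 ≤ t → t • x ∈ C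

/-- A locally finite polyhedral complex: near each point it looks like a translated fan. -/
def PolyhedralComplex.LocFinite {k : ℕ} (PC : PolyhedralComplex k) : Prop :=
  ∀ r : Vec k, ∃ ε : ℝ, 0 < ε ∧ ∃ F : PolyhedralComplex k, IsFan F ∧
    {S : Set (Vec k) | ∃ P ∈ PC.cells, S = P ∩ Metric.ball r ε ∧ S.Nonempty} =
    {S : Set (Vec k) | ∃ C ∈ F.cells,
      S = ((fun x => x + r) '' C) ∩ Metric.ball r ε ∧ S.Nonempty}

/-- `θ` is piecewise linear with cell complex `PC` (pure and complete), the maximal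
cell `P` carrying the gradient `grad P`. -/
def IsPWLWith {k : ℕ} (PC : PolyhedralComplex k) (grad : Set (Vec k) → Vec k)
    (θ : Vec k → ℝ) : Prop :=
  PC.Pure ∧ PC.Complete ∧
  ∀ P : Set (Vec k), IsMaximalCell PC P →
    ∃ δ : ℝ, ∀ x ∈ P, θ x = (inner ℝ (grad P) x : ℝ) + δ

/-- The gradient set of a piecewise linear function. -/
def gradSet {k : ℕ} (PC : PolyhedralComplex k) (grad : Set (Vec k) → Vec k) : Set (Vec k) :=
  {g | ∃ P : Set (Vec k), IsMaximalCell PC P ∧ grad P = g}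

/-!
Every valid function dominates a minimal one: by Zorn's lemma, since the pointwise infimum of a
chain of valid functions is valid (each feasible solution has finite support). If `π'` is valid
with `S(π) ⊆ S(π')`, a minimal `μ ≤ π'` has `S(π) ⊆ S(π') ⊆ S(μ)`, so `μ = π` and `π ≤ π'`.
Minimal functions are symmetric, `π r + π (-f - r) = 1`, so the two-point solution `{r, -f - r}`
lies in `S(π) ⊆ S(π')`; then `π' r + π' (-f - r) = 1` together with `π ≤ π'` forces `π' = π`.
-/

open Finsupp

section LinearCombination

variable {α : Type*}

lemma sum_support_mul_eq_linearCombination (θ : α → ℝ) (s : α →₀ ℕ) :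
    ∑ r ∈ s.support, θ r * (s r : ℝ) = linearCombination ℕ θ s := by
  simp [linearCombination_apply, Finsupp.sum, nsmul_eq_mul, mul_comm]

lemma sum_support_smul_eq_linearCombination {E : Type*} [AddCommGroup E] [Module ℝ E]
    (s : E →₀ ℕ) : ∑ r ∈ s.support, (s r : ℝ) • r = linearCombination ℕ id s := by
  simp [linearCombination_apply, Finsupp.sum, Nat.cast_smul_eq_nsmul]

lemma linearCombination_nonneg {θ : α → ℝ} (hθ : ∀ r, 0 ≤ θ r) (s : α →₀ ℕ) :
    0 ≤ linearCombination ℕ θ s := by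
  rw [linearCombination_apply]
  exact Finset.sum_nonneg fun r _ => nsmul_nonneg (hθ r) _

lemma linearCombination_update [DecidableEq α] (θ : α → ℝ) (c : α) (v : ℝ) (s : α →₀ ℕ) :
    linearCombination ℕ (Function.update θ c v) s =
      s c • v + linearCombination ℕ θ (s.erase c) := by
  conv_lhs => rw [← erase_add_single c s]
  rw [map_add, linearCombination_single, Function.update_self, add_comm]
  congr 1
  simp only [linearCombination_apply, Finsupp.sum, support_erase]
  refine Finset.sum_congr rfl fun r hr => ?_
  rw [Function.update_of_ne (Finset.ne_of_mem_erase hr)]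

end LinearCombination

variable {k : ℕ} {f : Vec k}

def intLattice (k : ℕ) : AddSubgroup (Vec k) :=
  (AddMonoidHom.mk' (intVec k) fun v w => by ext i; simp [intVec]).range

lemma isFeasible_iff {s : Vec k →₀ ℕ} :
    IsFeasible k f s ↔ f + linearCombination ℕ id s ∈ intLattice k := by
  rw [IsFeasible, sum_support_smul_eq_linearCombination]
  exact exists_congr fun w => eq_comm

lemma isFeasible_pair (f r : Vec k) : IsFeasible k f (single r 1 + single (-f - r) 1) := by
  rw [isFeasible_iff]
  convert (intLattice k).zero_mem using 1
  simp only [map_add, linearCombination_single, one_smul, id]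
  abel

lemma mem_Ssol_iff {θ : Vec k → ℝ} {s : Vec k →₀ ℕ} :
    s ∈ Ssol k f θ ↔ IsFeasible k f s ∧ linearCombination ℕ θ s = 1 := by
  rw [← sum_support_mul_eq_linearCombination]
  rfl

lemma IsValid.one_le {θ : Vec k → ℝ} (hθ : IsValid k f θ) {s : Vec k →₀ ℕ}
    (hs : IsFeasible k f s) : 1 ≤ linearCombination ℕ θ s :=
  sum_support_mul_eq_linearCombination θ s ▸ hθ.2 s hs

lemma Ssol_subset_Ssol_of_le {μ θ : Vec k → ℝ} (hμ : IsValid k f μ) (hle : μ ≤ θ) :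
    Ssol k f θ ⊆ Ssol k f μ := by
  intro s hs
  rw [mem_Ssol_iff] at hs ⊢
  refine ⟨hs.1, le_antisymm (hs.2 ▸ ?_) (hμ.one_le hs.1)⟩
  simp only [linearCombination_apply, Finsupp.sum]
  exact Finset.sum_le_sum fun r _ => nsmul_le_nsmul_right (hle r) _

lemma isValid_iInf {ι : Type*} [Preorder ι] [Nonempty ι] [IsDirectedOrder ι]
    {θ : ι → Vec k → ℝ} (hanti : Antitone θ) (hθ : ∀ i, IsValid k f (θ i)) :
    IsValid k f fun r => ⨅ i, θ i r := by
  have hbdd (r : Vec k) : BddBelow (Set.range fun i => θ i r) :=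
    ⟨0, by rintro _ ⟨i, rfl⟩; exact (hθ i).1 r⟩
  refine ⟨fun r => le_ciInf fun i => (hθ i).1 r, fun s hs => ?_⟩
  rw [sum_support_mul_eq_linearCombination]
  have hlim : Filter.Tendsto (fun i => linearCombination ℕ (θ i) s) Filter.atTop
      (nhds (linearCombination ℕ (fun r => ⨅ i, θ i r) s)) := by
    simp only [linearCombination_apply, Finsupp.sum]
    exact tendsto_finsetSum _ fun r _ =>
      (tendsto_atTop_ciInf (fun i j hij => hanti hij r) (hbdd r)).const_smul _
  exact ge_of_tendsto' hlim fun i => (hθ i).one_le hs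

lemma IsValid.exists_isMinimal_le {θ : Vec k → ℝ} (hθ : IsValid k f θ) :
    ∃ μ, IsMinimal k f μ ∧ μ ≤ θ := by
  let V : Set (Vec k → ℝ)ᵒᵈ := {μ | IsValid k f (OrderDual.ofDual μ)}
  have hchain : ∀ c ⊆ V, IsChain (· ≤ ·) c → ∀ ν ∈ c, ∃ lb ∈ V, ∀ μ ∈ c, μ ≤ lb := by
    intro c hc hchain ν hν
    have : Nonempty c := ⟨⟨ν, hν⟩⟩
    have : IsDirectedOrder c := hchain.directedOn.isDirectedOrder
    have hbdd (r : Vec k) : BddBelow (Set.range fun μ : c => OrderDual.ofDual μ.1 r) :=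
      ⟨0, by rintro _ ⟨μ, rfl⟩; exact (hc μ.2).1 r⟩
    exact ⟨OrderDual.toDual fun r => ⨅ μ : c, OrderDual.ofDual μ.1 r,
      isValid_iInf (fun _ _ h => h) fun μ => hc μ.2,
      fun μ hμ r => ciInf_le (hbdd r) ⟨μ, hμ⟩⟩
  obtain ⟨μ, hμθ, hμ⟩ := zorn_le_nonempty₀ V hchain (OrderDual.toDual θ) hθ
  refine ⟨OrderDual.ofDual μ, ⟨hμ.1, ?_⟩, hμθ⟩
  rintro ⟨μ', hμ', hne, hle⟩
  exact hne (le_antisymm hle (hμ.2 hμ' hle))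

lemma IsValid.update {π : Vec k → ℝ} (hπ : IsValid k f π) {c : Vec k} {v : ℝ} (hv : 0 ≤ v)
    (h : ∀ (m : ℕ) (t : Vec k →₀ ℕ), 0 < m →
      f + m • c + linearCombination ℕ id t ∈ intLattice k → 1 ≤ m • v + linearCombination ℕ π t) :
    IsValid k f (Function.update π c v) := by
  classical
  refine ⟨fun r => ?_, fun s hs => ?_⟩
  · rcases eq_or_ne r c with rfl | hr
    · simpa using hv
    · simpa [Function.update_of_ne hr] using hπ.1 r
  rw [sum_support_mul_eq_linearCombination, linearCombination_update]
  rcases Nat.eq_zero_or_pos (s c) with hc | hc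
  · rw [hc, zero_smul, zero_add, erase_of_notMem_support (notMem_support_iff.2 hc)]
    exact hπ.one_le hs
  · refine h (s c) (s.erase c) hc ?_
    have hsum := congrArg (linearCombination ℕ id) (erase_add_single c s)
    rw [map_add, linearCombination_single, id] at hsum
    rw [isFeasible_iff, ← hsum] at hs
    convert hs using 1
    abel

lemma IsMinimal.le_of_isValid_update {π : Vec k → ℝ} (hπ : IsMinimal k f π) {c : Vec k}
    {v : ℝ} (hv : IsValid k f (Function.update π c v)) : π c ≤ v := by
  by_contra! hlt
  refine hπ.2 ⟨_, hv, fun h => hlt.ne (by simpa using congrFun h c), fun r => ?_⟩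
  rcases eq_or_ne r c with rfl | hr
  · simpa using hlt.le
  · simp [Function.update_of_ne hr]

lemma IsMinimal.le_linearCombination {π : Vec k → ℝ} (hπ : IsMinimal k f π) {c : Vec k}
    {t : Vec k →₀ ℕ} (ht : linearCombination ℕ id t - c ∈ intLattice k) :
    π c ≤ linearCombination ℕ π t := by
  refine hπ.le_of_isValid_update <|
    hπ.1.update (linearCombination_nonneg hπ.1.1 t) fun m t' _ ht' => ?_
  have hfeas : IsFeasible k f (t' + m • t) := by
    rw [isFeasible_iff]
    convert add_mem ht' (nsmul_mem ht m) using 1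
    simp only [map_add, map_nsmul, smul_sub]
    abel
  simpa [add_comm] using hπ.1.one_le hfeas

lemma IsMinimal.add_apply_neg_sub_le_one_of_pos {π : Vec k → ℝ} (hπ : IsMinimal k f π)
    {r : Vec k} (hr : 0 < π r) : π r + π (-f - r) ≤ 1 := by
  by_contra! hS
  set S := π r + π (-f - r)
  have hS0 : 0 < S := by linarith
  -- Lowering `π r` to `π r / S` keeps `π` valid: a solution using `r` at least `S / π r` times
  -- is still paid for by `r` alone, and otherwise the loss `m (π r - π r / S) < S - 1` is
  -- covered by the excess `S - 1` of `π` on the pair `r, -f - r`.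
  suffices π r ≤ π r / S by
    rw [le_div_iff₀ hS0] at this
    nlinarith
  refine hπ.le_of_isValid_update <| hπ.1.update (by positivity) fun m t hm ht => ?_
  obtain ⟨n, rfl⟩ := Nat.exists_eq_add_of_lt hm
  have hrep : π (-f - r) ≤ linearCombination ℕ π t + n * π r := by
    have := hπ.le_linearCombination (t := t + n • single r 1) (c := -f - r) (by
      convert ht using 1
      simp only [map_add, map_nsmul, linearCombination_single, id, one_smul]
      module)
    simpa [nsmul_eq_mul] using this
  have ht0 := linearCombination_nonneg hπ.1.1 t
  rw [nsmul_eq_mul, zero_add]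
  push_cast at hrep ⊢
  have hq : (n + 1) * (π r / S) * S = (n + 1) * π r := by field_simp
  rcases le_or_gt S ((n + 1) * π r) with h | h <;> nlinarith

lemma IsMinimal.add_apply_neg_sub {π : Vec k → ℝ} (hπ : IsMinimal k f π) (r : Vec k) :
    π r + π (-f - r) = 1 := by
  refine le_antisymm ?_ (by simpa using hπ.1.one_le (isFeasible_pair f r))
  rcases (hπ.1.1 r).lt_or_eq with hr | hr
  · exact hπ.add_apply_neg_sub_le_one_of_pos hr
  rcases (hπ.1.1 (-f - r)).lt_or_eq with hy | hy
  · simpa [add_comm] using hπ.add_apply_neg_sub_le_one_of_pos hy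
  · rw [← hr, ← hy]; norm_num

lemma IsMinimal.eq_of_le_of_Ssol_subset {π θ : Vec k → ℝ} (hπ : IsMinimal k f π) (hle : π ≤ θ)
    (hS : Ssol k f π ⊆ Ssol k f θ) : θ = π := by
  funext r
  have hpair (φ : Vec k → ℝ) :
      linearCombination ℕ φ (single r 1 + single (-f - r) 1) = φ r + φ (-f - r) := by simp
  have hθ := (mem_Ssol_iff.1 (hS (mem_Ssol_iff.2
    ⟨isFeasible_pair f r, (hpair π).trans (hπ.add_apply_neg_sub r)⟩))).2
  rw [hpair] at hθ
  linarith [hle r, hle (-f - r), hπ.add_apply_neg_sub r]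

theorem statement5_general (k : ℕ) (f : Vec k) (π : Vec k → ℝ)
    (hmin : IsMinimal k f π)
    (h : ∀ πs : Vec k → ℝ, IsMinimal k f πs → Ssol k f π ⊆ Ssol k f πs → πs = π) :
    IsFacet k f π := by
  refine ⟨hmin.1, fun π' hπ' hsub => ?_⟩
  obtain ⟨μ, hμ, hμπ'⟩ := hπ'.exists_isMinimal_le
  obtain rfl : μ = π := h μ hμ (hsub.trans (Ssol_subset_Ssol_of_le hμ.1 hμπ'))
  exact hmin.eq_of_le_of_Ssol_subset hμπ' hsub

/-- If every minimal valid function `π*` with `S(π) ⊆ S(π*)` equals `π`, then `π` is a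
facet. -/
theorem statement5 (k : ℕ) (hk : 1 ≤ k) (f : Vec k) (π : Vec k → ℝ)
    (hmin : IsMinimal k f π)
    (h : ∀ πs : Vec k → ℝ, IsMinimal k f πs → Ssol k f π ⊆ Ssol k f πs → πs = π) :
    IsFacet k f π :=
  statement5_general k f π hmin h
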